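/- Let ẋ = h(x) = -M(x)⁻¹∇f(x) be autonomous natural gradient descent with f α-strongly g-convex in metric M (α > 0). Then along any solution, V(x) = h(x)ᵀM(x)h(x) = ∇f(x)ᵀM(x)⁻¹∇f(x) satisfies dV/dt = -2h(x)ᵀH(x)h(x) ≤ -2αV(x), so V decays exponentially: V(x(t)) ≤ e^{-2αt}V(x(0)). -/

import Mathlib

open Matrix

noncomputable def pd {ι : Type*} [Fintype ι] [DecidableEq ι]
    (f : (ι → ℝ) → ℝ) (i : ι) (x : ι → ℝ) : ℝ :=
  fderiv ℝ f x (Pi.single i 1)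

section Aux
variable {n : ℕ}

lemma fderiv_eq_sum_pd (φ : (Fin n → ℝ) → ℝ) (p v : Fin n → ℝ) :
    fderiv ℝ φ p v = ∑ m, v m * pd φ m p := by
  have hv : v = ∑ m, v m • (Pi.single m (1:ℝ) : Fin n → ℝ) := by
    funext j
    simp [Pi.single_apply]
  conv_lhs => rw [hv]
  rw [map_sum]
  simp [pd, smul_eq_mul]

lemma hasDerivAt_comp_pd {φ : (Fin n → ℝ) → ℝ} {x : ℝ → Fin n → ℝ} {v : Fin n → ℝ} {t : ℝ}
    (hφ : DifferentiableAt ℝ φ (x t)) (hx : HasDerivAt x v t) :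
    HasDerivAt (fun τ => φ (x τ)) (∑ m, v m * pd φ m (x t)) t := by
  have := hφ.hasFDerivAt.comp_hasDerivAt t hx
  rwa [show (fderiv ℝ φ (x t)) v = ∑ m, v m * pd φ m (x t) from fderiv_eq_sum_pd φ _ v] at this

lemma pd_congr {φ ψ : (Fin n → ℝ) → ℝ} (h : ∀ y, φ y = ψ y) (m : Fin n) (p : Fin n → ℝ) :
    pd φ m p = pd ψ m p := by
  have : φ = ψ := funext h
  rw [this]

lemma pd_const (c : ℝ) (m : Fin n) (p : Fin n → ℝ) : pd (fun _ => c) m p = 0 := by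
  simp [pd]

lemma pd_sum {ι : Type*} (s : Finset ι) (F : ι → (Fin n → ℝ) → ℝ) (m : Fin n) (p : Fin n → ℝ)
    (hF : ∀ i ∈ s, DifferentiableAt ℝ (F i) p) :
    pd (fun y => ∑ i ∈ s, F i y) m p = ∑ i ∈ s, pd (F i) m p := by
  unfold pd
  rw [fderiv_fun_sum hF]
  simp

lemma pd_mul {u v : (Fin n → ℝ) → ℝ} (m : Fin n) (p : Fin n → ℝ)
    (hu : DifferentiableAt ℝ u p) (hv : DifferentiableAt ℝ v p) :
    pd (fun y => u y * v y) m p = pd u m p * v p + u p * pd v m p := by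
  unfold pd
  rw [fderiv_fun_mul hu hv]
  simp [smul_eq_mul]
  ring

lemma diffAt_det {B : (Fin n → ℝ) → Matrix (Fin n) (Fin n) ℝ} {p : Fin n → ℝ}
    (hB : ∀ i j, DifferentiableAt ℝ (fun y => B y i j) p) :
    DifferentiableAt ℝ (fun y => (B y).det) p := by
  simp only [Matrix.det_apply']
  apply DifferentiableAt.fun_sum
  intro σ _
  have : DifferentiableAt ℝ (fun y => ∏ i, B y (σ i) i) p :=
    (HasFDerivAt.finset_prod (fun i (_ : i ∈ Finset.univ) =>
      (hB (σ i) i).hasFDerivAt)).differentiableAt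
  exact this.const_mul _

lemma diffAt_inv_entry {M : (Fin n → ℝ) → Matrix (Fin n) (Fin n) ℝ}
    (hMsm : ∀ i j, ContDiff ℝ (⊤ : ℕ∞) fun x => M x i j) (hMpos : ∀ x, (M x).PosDef)
    (i j : Fin n) (p : Fin n → ℝ) :
    DifferentiableAt ℝ (fun y => (M y)⁻¹ i j) p := by
  have key : ∀ y, (M y)⁻¹ i j = (M y).det⁻¹ * (M y).adjugate i j := by
    intro y
    rw [Matrix.inv_def, Ring.inverse_eq_inv']
    simp [Matrix.smul_apply, smul_eq_mul]
  simp only [key]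
  have hde : ∀ q, DifferentiableAt ℝ (fun y => (M y).det) q := fun q =>
    diffAt_det (fun i j => ((hMsm i j).differentiable (by simp)).differentiableAt)
  have hdet_ne : (M p).det ≠ 0 := ne_of_gt (hMpos p).det_pos
  apply ((hde p).inv hdet_ne).mul
  simp only [Matrix.adjugate_apply]
  apply diffAt_det
  intro i' k
  simp only [Matrix.updateRow_apply]
  by_cases h : i' = j
  · simp [h]
  · simp only [h, if_false]
    exact ((hMsm i' k).differentiable (by simp)).differentiableAt

end Aux


section Alg
variable {n : ℕ}

lemma sum_exchange (a F : Fin n → ℝ) (B : Fin n → Fin n → ℝ) :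
    ∑ i, a i * ∑ l, B i l * F l = ∑ l, (∑ i, a i * B i l) * F l := by
  simp_rw [Finset.mul_sum, Finset.sum_mul]
  rw [Finset.sum_comm]
  exact Finset.sum_congr rfl fun l _ => Finset.sum_congr rfl fun i _ => by ring

lemma sum_exchange' (a c : Fin n → ℝ) (B : Fin n → Fin n → ℝ) :
    ∑ j, (∑ k, a k * B k j) * c j = ∑ k, a k * ∑ j, B k j * c j := by
  simp_rw [Finset.sum_mul, Finset.mul_sum]
  rw [Finset.sum_comm]
  exact Finset.sum_congr rfl fun k _ => Finset.sum_congr rfl fun j _ => by ring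

lemma sum3_rot (F : Fin n → Fin n → Fin n → ℝ) :
    ∑ i, ∑ j, ∑ m, F i j m = ∑ m, ∑ i, ∑ j, F i j m := by
  calc ∑ i, ∑ j, ∑ m, F i j m = ∑ i, ∑ m, ∑ j, F i j m :=
        Finset.sum_congr rfl fun i _ => Finset.sum_comm
    _ = ∑ m, ∑ i, ∑ j, F i j m := Finset.sum_comm

lemma algebra_key (v g : Fin n → ℝ) (N A : Matrix (Fin n) (Fin n) ℝ)
    (dm P : Fin n → Fin n → Fin n → ℝ) (hess : Fin n → Fin n → ℝ)
    (hNsym : ∀ i j, N i j = N j i)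
    (hAsym : ∀ i j, A i j = A j i)
    (hv : ∀ i, v i = -∑ j, N i j * g j)
    (hP : ∀ m i j, P m i j = -∑ l, N i l * (∑ k, dm m l k * N k j))
    (hAv : ∀ i, (∑ j, A i j * v j) = -g i) :
    (∑ i, ((-∑ j, ((∑ m, v m * P m i j) * g j + N i j * (∑ m, v m * hess m j))) * (∑ j, A i j * v j)
      + v i * (∑ j, ((∑ m, v m * dm m i j) * v j
          + A i j * (-∑ k, ((∑ m, v m * P m j k) * g k + N j k * (∑ m, v m * hess m k)))))))
    = -2 * ∑ i, v i * ∑ j,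
        (hess i j - ∑ k, ((1/2) * ∑ l, N k l * (dm j i l + dm i j l - dm l i j)) * g k) * v j := by
  set S : ℝ := ∑ m, ∑ i, ∑ j, v m * (v i * (v j * dm m i j)) with hS
  set W : ℝ := ∑ m, v m * ∑ j, v j * hess m j with hW
  have hNg : ∀ l, ∑ k, N k l * g k = -v l := by
    intro l
    rw [hv l, neg_neg]
    exact Finset.sum_congr rfl fun k _ => by rw [hNsym k l]
  have hNg' : ∀ l, ∑ k, g k * N k l = -v l := by
    intro l; rw [← hNg l]; exact Finset.sum_congr rfl fun k _ => by ring
  have hgN : ∀ k, ∑ j, N k j * g j = -v k := fun k => by rw [hv k, neg_neg]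
  -- ============ ∑_i Dh i * g i = S + W ============
  have hDhg : ∑ i, (-∑ j, ((∑ m, v m * P m i j) * g j + N i j * (∑ m, v m * hess m j))) * g i
      = S + W := by
    have expand : ∀ i, (-∑ j, ((∑ m, v m * P m i j) * g j + N i j * (∑ m, v m * hess m j))) * g i
        = -(∑ j, (∑ m, v m * P m i j) * g j * g i)
          - (∑ j, N i j * (∑ m, v m * hess m j) * g i) := by
      intro i
      rw [Finset.sum_add_distrib, neg_add, add_mul, neg_mul, neg_mul,
        Finset.sum_mul, Finset.sum_mul]
      ring
    rw [Finset.sum_congr rfl fun i _ => expand i, Finset.sum_sub_distrib,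
      Finset.sum_neg_distrib]
    have T2 : ∑ i, ∑ j, N i j * (∑ m, v m * hess m j) * g i = -W := by
      have e1 : ∀ i, ∑ j, N i j * (∑ m, v m * hess m j) * g i
          = g i * ∑ j, N i j * (∑ m, v m * hess m j) := by
        intro i; rw [Finset.mul_sum]; exact Finset.sum_congr rfl fun j _ => by ring
      rw [Finset.sum_congr rfl fun i _ => e1 i, sum_exchange g (fun j => ∑ m, v m * hess m j) N]
      have e2 : ∀ j, (∑ i, g i * N i j) * (∑ m, v m * hess m j)
          = -(v j * ∑ m, v m * hess m j) := by
        intro j; rw [hNg' j]; ring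
      rw [Finset.sum_congr rfl fun j _ => e2 j, Finset.sum_neg_distrib, neg_inj]
      have e3 : ∀ j, v j * ∑ m, v m * hess m j = v j * ∑ m, hess m j * v m := by
        intro j; congr 1; exact Finset.sum_congr rfl fun m _ => by ring
      rw [Finset.sum_congr rfl fun j _ => e3 j, sum_exchange, hW]
      refine Finset.sum_congr rfl fun m _ => ?_
      rw [Finset.mul_sum, Finset.sum_mul]
      exact Finset.sum_congr rfl fun j _ => by ring
    have T1 : ∑ i, ∑ j, (∑ m, v m * P m i j) * g j * g i = -S := by
      have e1 : ∀ i, ∑ j, (∑ m, v m * P m i j) * g j * g i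
          = ∑ j, ∑ m, v m * P m i j * g j * g i := by
        intro i
        exact Finset.sum_congr rfl fun j _ => by rw [Finset.sum_mul, Finset.sum_mul]
      rw [Finset.sum_congr rfl fun i _ => e1 i, sum3_rot, hS, ← Finset.sum_neg_distrib]
      refine Finset.sum_congr rfl fun m _ => ?_
      -- fix m
      have eK : ∀ i, ∑ j, P m i j * g j = ∑ l, N i l * ∑ k, dm m l k * v k := by
        intro i
        have s1 : ∀ j, P m i j * g j
            = -∑ l, N i l * ((∑ k, dm m l k * N k j) * g j) := by
          intro j
          rw [hP m i j, neg_mul, Finset.sum_mul, neg_inj]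
          exact Finset.sum_congr rfl fun l _ => by ring
        rw [Finset.sum_congr rfl fun j _ => s1 j, Finset.sum_neg_distrib, Finset.sum_comm]
        have s2 : ∀ l, ∑ j, N i l * ((∑ k, dm m l k * N k j) * g j)
            = N i l * ∑ j, (∑ k, dm m l k * N k j) * g j := by
          intro l; rw [Finset.mul_sum]
        rw [Finset.sum_congr rfl fun l _ => s2 l]
        have s3 : ∀ l, ∑ j, (∑ k, dm m l k * N k j) * g j = -∑ k, dm m l k * v k := by
          intro l
          rw [sum_exchange' (fun k => dm m l k) g N]
          have : ∀ k, dm m l k * ∑ j, N k j * g j = -(dm m l k * v k) := by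
            intro k; rw [hgN k]; ring
          rw [Finset.sum_congr rfl fun k _ => this k, Finset.sum_neg_distrib]
        have s4 : ∀ l, N i l * ∑ j, (∑ k, dm m l k * N k j) * g j
            = -(N i l * ∑ k, dm m l k * v k) := by
          intro l; rw [s3 l]; ring
        rw [Finset.sum_congr rfl fun l _ => s4 l, Finset.sum_neg_distrib, neg_neg]
      -- now: ∑ i, ∑ j, v m * P m i j * g j * g i = -(∑ i, ∑ j, v m * (v i * (v j * dm m i j)))
      have e3 : ∀ i, ∑ j, v m * P m i j * g j * g i
          = v m * (g i * ∑ j, P m i j * g j) := by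
        intro i
        rw [Finset.mul_sum, Finset.mul_sum]
        exact Finset.sum_congr rfl fun j _ => by ring
      rw [Finset.sum_congr rfl fun i _ => e3 i]
      have e4 : ∀ i, v m * (g i * ∑ j, P m i j * g j)
          = v m * (g i * ∑ l, N i l * ∑ k, dm m l k * v k) := by
        intro i; rw [eK i]
      rw [Finset.sum_congr rfl fun i _ => e4 i, ← Finset.mul_sum,
        sum_exchange g (fun l => ∑ k, dm m l k * v k) N]
      have e5 : ∀ l, (∑ i, g i * N i l) * (∑ k, dm m l k * v k)
          = -(v l * ∑ k, dm m l k * v k) := by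
        intro l; rw [hNg' l]; ring
      rw [Finset.sum_congr rfl fun l _ => e5 l, Finset.sum_neg_distrib, mul_neg, ← neg_mul]
      rw [show ∀ x : ℝ, -v m * x = -(v m * x) from fun x => by ring]
      rw [neg_inj, Finset.mul_sum]
      refine Finset.sum_congr rfl fun i _ => ?_
      rw [Finset.mul_sum, Finset.mul_sum]
      exact Finset.sum_congr rfl fun j _ => by ring
    rw [T1, T2]; ring
  -- ============ split the main sum ============
  have split : ∀ i : Fin n,
      (-∑ j, ((∑ m, v m * P m i j) * g j + N i j * (∑ m, v m * hess m j))) * (∑ j, A i j * v j)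
      + v i * (∑ j, ((∑ m, v m * dm m i j) * v j
          + A i j * (-∑ k, ((∑ m, v m * P m j k) * g k + N j k * (∑ m, v m * hess m k)))))
      = -((-∑ j, ((∑ m, v m * P m i j) * g j + N i j * (∑ m, v m * hess m j))) * g i)
        + v i * (∑ j, (∑ m, v m * dm m i j) * v j)
        + v i * (∑ j, A i j * (-∑ k, ((∑ m, v m * P m j k) * g k
            + N j k * (∑ m, v m * hess m k)))) := by
    intro i
    have e : (∑ j, ((∑ m, v m * dm m i j) * v j
        + A i j * (-∑ k, ((∑ m, v m * P m j k) * g k + N j k * (∑ m, v m * hess m k)))))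
        = (∑ j, (∑ m, v m * dm m i j) * v j)
          + ∑ j, A i j * (-∑ k, ((∑ m, v m * P m j k) * g k
              + N j k * (∑ m, v m * hess m k))) := Finset.sum_add_distrib
    rw [hAv i, e]
    ring
  rw [Finset.sum_congr rfl fun i _ => split i, Finset.sum_add_distrib, Finset.sum_add_distrib]
  have hT1 : ∑ i, -((-∑ j, ((∑ m, v m * P m i j) * g j
      + N i j * (∑ m, v m * hess m j))) * g i) = -(S + W) := by
    rw [Finset.sum_neg_distrib, hDhg]
  have hT2 : ∑ i, v i * (∑ j, (∑ m, v m * dm m i j) * v j) = S := by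
    have e1 : ∀ i : Fin n, v i * (∑ j, (∑ m, v m * dm m i j) * v j)
        = v i * ∑ m, (∑ j, dm m i j * v j) * v m := by
      intro i
      rw [sum_exchange' v v (fun m j => dm m i j)]
      congr 1
      exact Finset.sum_congr rfl fun m _ => by ring
    rw [Finset.sum_congr rfl fun i _ => e1 i,
      sum_exchange v v (fun i m => ∑ j, dm m i j * v j), hS]
    refine Finset.sum_congr rfl fun m _ => ?_
    rw [Finset.sum_mul]
    refine Finset.sum_congr rfl fun i _ => ?_
    rw [Finset.mul_sum, Finset.sum_mul]
    exact Finset.sum_congr rfl fun j _ => by ring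
  have hT3 : ∑ i, v i * (∑ j, A i j * (-∑ k, ((∑ m, v m * P m j k) * g k
      + N j k * (∑ m, v m * hess m k)))) = -(S + W) := by
    rw [sum_exchange v (fun j => -∑ k, ((∑ m, v m * P m j k) * g k
      + N j k * (∑ m, v m * hess m k))) A]
    have evA : ∀ j, ∑ i, v i * A i j = -g j := by
      intro j
      rw [← hAv j]
      exact Finset.sum_congr rfl fun i _ => by rw [hAsym i j]; ring
    have e2 : ∀ j, (∑ i, v i * A i j) * (-∑ k, ((∑ m, v m * P m j k) * g k
        + N j k * (∑ m, v m * hess m k)))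
        = -((-∑ k, ((∑ m, v m * P m j k) * g k + N j k * (∑ m, v m * hess m k))) * g j) := by
      intro j; rw [evA j]; ring
    rw [Finset.sum_congr rfl fun j _ => e2 j, Finset.sum_neg_distrib, hDhg]
  rw [hT1, hT2, hT3]
  -- ============ the right-hand side ============
  have hQ : ∑ i, v i * ∑ j,
      (hess i j - ∑ k, ((1/2) * ∑ l, N k l * (dm j i l + dm i j l - dm l i j)) * g k) * v j
      = W + (1/2) * S := by
    have c1 : ∀ i : Fin n, v i * ∑ j,
        (hess i j - ∑ k, ((1/2) * ∑ l, N k l * (dm j i l + dm i j l - dm l i j)) * g k) * v j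
        = v i * (∑ j, hess i j * v j)
          - v i * (∑ j, (∑ k, ((1/2) * ∑ l, N k l * (dm j i l + dm i j l - dm l i j)) * g k) * v j) := by
      intro i
      rw [Finset.sum_congr rfl fun j (_ : j ∈ Finset.univ) => sub_mul _ _ (v j),
        Finset.sum_sub_distrib, mul_sub]
    rw [Finset.sum_congr rfl fun i _ => c1 i, Finset.sum_sub_distrib]
    have hHq : ∑ i, v i * (∑ j, hess i j * v j) = W := by
      rw [hW]
      exact Finset.sum_congr rfl fun i _ => by
        congr 1
        exact Finset.sum_congr rfl fun j _ => by ring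
    have hCq : ∑ i, v i * (∑ j, (∑ k, ((1/2) * ∑ l, N k l
        * (dm j i l + dm i j l - dm l i j)) * g k) * v j) = -((1/2) * S) := by
      -- collapse the k-sum
      have c2 : ∀ i j : Fin n, ∑ k, ((1/2) * ∑ l, N k l * (dm j i l + dm i j l - dm l i j)) * g k
          = -((1/2) * ∑ l, v l * (dm j i l + dm i j l - dm l i j)) := by
        intro i j
        have e : ∀ k, ((1/2) * ∑ l, N k l * (dm j i l + dm i j l - dm l i j)) * g k
            = (1/2 : ℝ) * (g k * ∑ l, N k l * (dm j i l + dm i j l - dm l i j)) := by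
          intro k; ring
        rw [Finset.sum_congr rfl fun k _ => e k, ← Finset.mul_sum,
          sum_exchange g (fun l => dm j i l + dm i j l - dm l i j) N]
        have e2 : ∀ l, (∑ k, g k * N k l) * (dm j i l + dm i j l - dm l i j)
            = -(v l * (dm j i l + dm i j l - dm l i j)) := by
          intro l; rw [hNg' l]; ring
        rw [Finset.sum_congr rfl fun l _ => e2 l, Finset.sum_neg_distrib]
        ring
      -- flatten to the triple sum U
      have c3 : ∀ i : Fin n, v i * (∑ j, (∑ k, ((1/2) * ∑ l, N k l
          * (dm j i l + dm i j l - dm l i j)) * g k) * v j)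
          = -((1/2) * ∑ j, ∑ l, v i * (v j * (v l * (dm j i l + dm i j l - dm l i j)))) := by
        intro i
        rw [Finset.sum_congr rfl fun j (_ : j ∈ Finset.univ) => by rw [c2 i j]]
        have e1 : ∀ j, (-((1/2 : ℝ) * ∑ l, v l * (dm j i l + dm i j l - dm l i j))) * v j
            = -∑ l, (1/2 : ℝ) * (v j * (v l * (dm j i l + dm i j l - dm l i j))) := by
          intro j
          rw [neg_mul, neg_inj, Finset.mul_sum, Finset.sum_mul]
          exact Finset.sum_congr rfl fun l _ => by ring
        rw [Finset.sum_congr rfl fun j _ => e1 j, Finset.sum_neg_distrib, mul_neg, neg_inj,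
          Finset.mul_sum, Finset.mul_sum]
        refine Finset.sum_congr rfl fun j _ => ?_
        rw [Finset.mul_sum, Finset.mul_sum]
        exact Finset.sum_congr rfl fun l _ => by ring
      rw [Finset.sum_congr rfl fun i _ => c3 i, Finset.sum_neg_distrib, neg_inj,
        ← Finset.mul_sum]
      congr 1
      have esplit : ∀ i j l : Fin n, v i * (v j * (v l * (dm j i l + dm i j l - dm l i j)))
          = v i * (v j * (v l * dm j i l)) + v i * (v j * (v l * dm i j l))
            - v i * (v j * (v l * dm l i j)) := by
        intro i j l; ring
      rw [Finset.sum_congr rfl fun i (_ : i ∈ Finset.univ) =>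
        Finset.sum_congr rfl fun j (_ : j ∈ Finset.univ) =>
          Finset.sum_congr rfl fun l (_ : l ∈ Finset.univ) => esplit i j l]
      simp only [Finset.sum_add_distrib, Finset.sum_sub_distrib]
      have h1 : ∑ i, ∑ j, ∑ l, v i * (v j * (v l * dm j i l)) = S := by
        rw [Finset.sum_comm, hS]
        exact Finset.sum_congr rfl fun j _ => Finset.sum_congr rfl fun i _ =>
          Finset.sum_congr rfl fun l _ => by ring
      have h2 : ∑ i, ∑ j, ∑ l, v i * (v j * (v l * dm i j l)) = S := by rw [hS]
      have h3 : ∑ i, ∑ j, ∑ l, v i * (v j * (v l * dm l i j)) = S := by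
        rw [sum3_rot, hS]
        exact Finset.sum_congr rfl fun l _ => Finset.sum_congr rfl fun i _ =>
          Finset.sum_congr rfl fun j _ => by ring
      rw [h1, h2, h3]
      ring
    rw [hHq, hCq]
    ring
  rw [hQ]
  ring

end Alg


noncomputable def christoffel {ι : Type*} [Fintype ι] [DecidableEq ι]
    (M : (ι → ℝ) → Matrix ι ι ℝ) (m i j : ι) (x : ι → ℝ) : ℝ :=
  (1 / 2) * ∑ k, (M x)⁻¹ m k *
    (pd (fun y => M y i k) j x + pd (fun y => M y j k) i x - pd (fun y => M y i j) k x)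

/-- Riemannian Hessian H_{ij} = ∂²g/∂xᵢ∂xⱼ - Γᵏ_{ij} ∂g/∂xₖ in metric M. -/
noncomputable def riemHess {ι : Type*} [Fintype ι] [DecidableEq ι]
    (M : (ι → ℝ) → Matrix ι ι ℝ) (g : (ι → ℝ) → ℝ) (x : ι → ℝ) : Matrix ι ι ℝ :=
  Matrix.of fun i j =>
    pd (fun y => pd g j y) i x - ∑ k, christoffel M k i j x * pd g k x

open Matrix

/-- Autonomous natural gradient field h(x) = -M(x)⁻¹∇f(x). -/
noncomputable def natGradA {n : ℕ} (M : (Fin n → ℝ) → Matrix (Fin n) (Fin n) ℝ)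
    (f : (Fin n → ℝ) → ℝ) (x : Fin n → ℝ) : Fin n → ℝ :=
  -((M x)⁻¹.mulVec fun i => pd f i x)


/-- Along any solution of autonomous natural gradient descent of an α-strongly
g-convex f, the function V = hᵀMh satisfies V̇ = -2hᵀHh ≤ -2αV and decays as
V(x(t)) ≤ e^{-2αt} V(x(0)). -/
theorem natGrad_lyapunov_decay {n : ℕ}
    (M : (Fin n → ℝ) → Matrix (Fin n) (Fin n) ℝ)
    (f : (Fin n → ℝ) → ℝ) (α : ℝ) (hα : 0 < α)
    (hf : ContDiff ℝ 2 f)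
    (hMsm : ∀ i j, ContDiff ℝ (⊤ : ℕ∞) fun x => M x i j)
    (hMsymm : ∀ x, (M x).IsSymm) (hMpos : ∀ x, (M x).PosDef)
    (hH : ∀ x : Fin n → ℝ, (riemHess M f x - α • M x).PosSemidef)
    (x : ℝ → Fin n → ℝ)
    (hx : ∀ t : ℝ, HasDerivAt x (natGradA M f (x t)) t) :
    (∀ t : ℝ,
      HasDerivAt
        (fun τ => dotProduct (natGradA M f (x τ)) ((M (x τ)).mulVec (natGradA M f (x τ))))
        (-2 * dotProduct (natGradA M f (x t)) ((riemHess M f (x t)).mulVec (natGradA M f (x t)))) t) ∧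
    (∀ t : ℝ, 0 ≤ t →
      dotProduct (natGradA M f (x t)) ((M (x t)).mulVec (natGradA M f (x t)))
        ≤ Real.exp (-2 * α * t) *
          dotProduct (natGradA M f (x 0)) ((M (x 0)).mulVec (natGradA M f (x 0)))) := by
  -- basic differentiability facts
  have hfd1 : ContDiff ℝ 1 (fderiv ℝ f) := hf.fderiv_right (by norm_num)
  have hgd : ∀ (j : Fin n) (p : Fin n → ℝ), DifferentiableAt ℝ (fun y => pd f j y) p := by
    intro j p
    have : ContDiff ℝ 1 fun y => (fderiv ℝ f y) (Pi.single j 1) := hfd1.clm_apply contDiff_const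
    exact (this.differentiable one_ne_zero).differentiableAt
  have hMd : ∀ (i j : Fin n) (p : Fin n → ℝ), DifferentiableAt ℝ (fun y => M y i j) p :=
    fun i j p => ((hMsm i j).differentiable (by simp)).differentiableAt
  have hNd : ∀ (i j : Fin n) (p : Fin n → ℝ), DifferentiableAt ℝ (fun y => (M y)⁻¹ i j) p :=
    fun i j p => diffAt_inv_entry hMsm hMpos i j p
  have hMdet : ∀ p : Fin n → ℝ, IsUnit (M p).det := fun p =>
    isUnit_iff_ne_zero.mpr (ne_of_gt (hMpos p).det_pos)
  have hMN : ∀ p : Fin n → ℝ, M p * (M p)⁻¹ = 1 := fun p => Matrix.mul_nonsing_inv _ (hMdet p)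
  have hNM : ∀ p : Fin n → ℝ, (M p)⁻¹ * M p = 1 := fun p => Matrix.nonsing_inv_mul _ (hMdet p)
  have hMsymE : ∀ (p : Fin n → ℝ) i j, M p i j = M p j i := fun p i j =>
    ((hMsymm p).apply i j).symm
  have hNsymE : ∀ (p : Fin n → ℝ) i j, (M p)⁻¹ i j = (M p)⁻¹ j i := by
    intro p i j
    have h1 : ((M p)⁻¹)ᵀ = (M p)⁻¹ := by
      rw [Matrix.transpose_nonsing_inv, (hMsymm p).eq]
    calc (M p)⁻¹ i j = ((M p)⁻¹)ᵀ j i := rfl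
      _ = (M p)⁻¹ j i := by rw [h1]
  have hna : ∀ (p : Fin n → ℝ) i, natGradA M f p i = -∑ j, (M p)⁻¹ i j * pd f j p := by
    intro p i
    simp [natGradA, Matrix.mulVec, dotProduct]
  have hAv : ∀ (p : Fin n → ℝ) i, ∑ j, M p i j * natGradA M f p j = -pd f i p := by
    intro p i
    have h2 : (M p).mulVec (natGradA M f p) i = -pd f i p := by
      unfold natGradA
      rw [Matrix.mulVec_neg, Matrix.mulVec_mulVec, hMN p, Matrix.one_mulVec]
      simp
    calc ∑ j, M p i j * natGradA M f p j = (M p).mulVec (natGradA M f p) i := by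
          simp [Matrix.mulVec, dotProduct]
      _ = -pd f i p := h2
  -- the key derivative computation
  have keyD : ∀ t : ℝ, HasDerivAt
      (fun τ => dotProduct (natGradA M f (x τ)) ((M (x τ)).mulVec (natGradA M f (x τ))))
      (-2 * dotProduct (natGradA M f (x t)) ((riemHess M f (x t)).mulVec (natGradA M f (x t)))) t := by
    intro t
    have HM : ∀ i j, HasDerivAt (fun τ => M (x τ) i j)
        (∑ m, natGradA M f (x t) m * pd (fun y => M y i j) m (x t)) t :=
      fun i j => hasDerivAt_comp_pd (hMd i j (x t)) (hx t)
    have Hg : ∀ j, HasDerivAt (fun τ => pd f j (x τ))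
        (∑ m, natGradA M f (x t) m * pd (fun y => pd f j y) m (x t)) t :=
      fun j => hasDerivAt_comp_pd (hgd j (x t)) (hx t)
    have HN : ∀ i j, HasDerivAt (fun τ => (M (x τ))⁻¹ i j)
        (∑ m, natGradA M f (x t) m * pd (fun y => (M y)⁻¹ i j) m (x t)) t :=
      fun i j => hasDerivAt_comp_pd (hNd i j (x t)) (hx t)
    have Hh : ∀ i, HasDerivAt (fun τ => natGradA M f (x τ) i)
        (-∑ j, ((∑ m, natGradA M f (x t) m * pd (fun y => (M y)⁻¹ i j) m (x t)) * pd f j (x t)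
          + (M (x t))⁻¹ i j * (∑ m, natGradA M f (x t) m * pd (fun y => pd f j y) m (x t)))) t := by
      intro i
      have e : (fun τ => natGradA M f (x τ) i)
          = fun τ => -∑ j, (M (x τ))⁻¹ i j * pd f j (x τ) := funext fun τ => hna (x τ) i
      rw [e]
      exact (HasDerivAt.fun_sum fun j _ => (HN i j).mul (Hg j)).neg
    -- pd of inverse entries via implicit differentiation of M * M⁻¹ = 1
    have hPrel : ∀ m i j, pd (fun y => (M y)⁻¹ i j) m (x t)
        = -∑ l, (M (x t))⁻¹ i l *
            (∑ k, pd (fun y => M y l k) m (x t) * (M (x t))⁻¹ k j) := by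
      intro m i j
      have key : ∀ r : Fin n, ∑ k, M (x t) r k * pd (fun y => (M y)⁻¹ k j) m (x t)
          = -∑ k, pd (fun y => M y r k) m (x t) * (M (x t))⁻¹ k j := by
        intro r
        have hconstf : ∀ y : Fin n → ℝ, ∑ k, M y r k * (M y)⁻¹ k j
            = (1 : Matrix (Fin n) (Fin n) ℝ) r j := by
          intro y; rw [← Matrix.mul_apply, hMN y]
        have h0 : pd (fun y => ∑ k, M y r k * (M y)⁻¹ k j) m (x t) = 0 := by
          rw [pd_congr hconstf m (x t)]
          exact pd_const _ _ _
        have hexp : pd (fun y => ∑ k, M y r k * (M y)⁻¹ k j) m (x t)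
            = ∑ k, (pd (fun y => M y r k) m (x t) * (M (x t))⁻¹ k j
                + M (x t) r k * pd (fun y => (M y)⁻¹ k j) m (x t)) := by
          rw [pd_sum Finset.univ (fun k => fun y => M y r k * (M y)⁻¹ k j) m (x t)
            (fun k _ => (hMd r k (x t)).mul (hNd k j (x t)))]
          exact Finset.sum_congr rfl fun k _ => pd_mul m (x t) (hMd r k (x t)) (hNd k j (x t))
        rw [hexp, Finset.sum_add_distrib] at h0
        linarith [h0]
      have hstep : ∀ P' : Fin n → ℝ,
          ∑ l, (M (x t))⁻¹ i l * ∑ k, M (x t) l k * P' k = P' i := by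
        intro P'
        rw [sum_exchange (fun l => (M (x t))⁻¹ i l) P' (M (x t))]
        have e : ∀ k, (∑ l, (M (x t))⁻¹ i l * M (x t) l k)
            = (1 : Matrix (Fin n) (Fin n) ℝ) i k := by
          intro k; rw [← Matrix.mul_apply, hNM]
        rw [Finset.sum_congr rfl fun k (_ : k ∈ Finset.univ) => by rw [e k]]
        simp [Matrix.one_apply]
      calc pd (fun y => (M y)⁻¹ i j) m (x t)
          = ∑ l, (M (x t))⁻¹ i l * ∑ k, M (x t) l k * pd (fun y => (M y)⁻¹ k j) m (x t) :=
            (hstep (fun k => pd (fun y => (M y)⁻¹ k j) m (x t))).symm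
        _ = ∑ l, (M (x t))⁻¹ i l *
              (-∑ k, pd (fun y => M y l k) m (x t) * (M (x t))⁻¹ k j) :=
            Finset.sum_congr rfl fun l _ => by rw [key l]
        _ = -∑ l, (M (x t))⁻¹ i l *
              (∑ k, pd (fun y => M y l k) m (x t) * (M (x t))⁻¹ k j) := by
            rw [← Finset.sum_neg_distrib]
            exact Finset.sum_congr rfl fun l _ => by ring
    -- assemble
    have eV : (fun τ => dotProduct (natGradA M f (x τ)) ((M (x τ)).mulVec (natGradA M f (x τ))))
        = fun τ => ∑ i, natGradA M f (x τ) i * ∑ j, M (x τ) i j * natGradA M f (x τ) j := by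
      funext τ; simp [dotProduct, Matrix.mulVec]
    have HV := HasDerivAt.fun_sum (u := Finset.univ) fun i (_ : i ∈ Finset.univ) =>
      (Hh i).mul (HasDerivAt.fun_sum (u := Finset.univ) fun j (_ : j ∈ Finset.univ) =>
        (HM i j).mul (Hh j))
    rw [eV]
    refine HV.congr_deriv ?_
    have halg := algebra_key (natGradA M f (x t)) (fun j => pd f j (x t)) ((M (x t))⁻¹) (M (x t))
      (fun m i j => pd (fun y => M y i j) m (x t))
      (fun m i j => pd (fun y => (M y)⁻¹ i j) m (x t))
      (fun i j => pd (fun y => pd f j y) i (x t))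
      (hNsymE (x t)) (hMsymE (x t)) (hna (x t)) hPrel (hAv (x t))
    have eR : dotProduct (natGradA M f (x t)) ((riemHess M f (x t)).mulVec (natGradA M f (x t)))
        = ∑ i, natGradA M f (x t) i * ∑ j,
            (pd (fun y => pd f j y) i (x t)
              - ∑ k, ((1/2) * ∑ l, (M (x t))⁻¹ k l *
                  (pd (fun y => M y i l) j (x t) + pd (fun y => M y j l) i (x t)
                    - pd (fun y => M y i j) l (x t))) * pd f k (x t))
              * natGradA M f (x t) j := by
      simp [dotProduct, Matrix.mulVec, riemHess, christoffel]
    rw [eR]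
    exact halg
  refine ⟨keyD, ?_⟩
  intro t ht
  have hbound : ∀ s : ℝ,
      -2 * dotProduct (natGradA M f (x s)) ((riemHess M f (x s)).mulVec (natGradA M f (x s)))
      ≤ -2 * α * dotProduct (natGradA M f (x s)) ((M (x s)).mulVec (natGradA M f (x s))) := by
    intro s
    have h0 := (hH (x s)).dotProduct_mulVec_nonneg (natGradA M f (x s))
    rw [Matrix.sub_mulVec, Matrix.smul_mulVec, dotProduct_sub, dotProduct_smul] at h0
    simp only [smul_eq_mul, star_trivial] at h0
    nlinarith [h0]
  have hWd : ∀ s : ℝ, HasDerivAt (fun τ => Real.exp (2*α*τ) *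
      dotProduct (natGradA M f (x τ)) ((M (x τ)).mulVec (natGradA M f (x τ))))
      (Real.exp (2*α*s) * (2*α) *
          dotProduct (natGradA M f (x s)) ((M (x s)).mulVec (natGradA M f (x s)))
        + Real.exp (2*α*s) *
          (-2 * dotProduct (natGradA M f (x s)) ((riemHess M f (x s)).mulVec (natGradA M f (x s))))) s := by
    intro s
    have h1 : HasDerivAt (fun τ : ℝ => 2*α*τ) (2*α) s := by
      simpa using (hasDerivAt_id s).const_mul (2*α)
    exact h1.exp.mul (keyD s)
  have hWdiff : Differentiable ℝ (fun τ => Real.exp (2*α*τ) *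
      dotProduct (natGradA M f (x τ)) ((M (x τ)).mulVec (natGradA M f (x τ)))) :=
    fun s => (hWd s).differentiableAt
  have hderiv : ∀ s, deriv (fun τ => Real.exp (2*α*τ) *
      dotProduct (natGradA M f (x τ)) ((M (x τ)).mulVec (natGradA M f (x τ)))) s ≤ 0 := by
    intro s
    rw [(hWd s).deriv]
    have h2 := mul_le_mul_of_nonneg_left (hbound s) (Real.exp_pos (2*α*s)).le
    nlinarith [h2]
  have hmono : AntitoneOn (fun τ => Real.exp (2*α*τ) *
      dotProduct (natGradA M f (x τ)) ((M (x τ)).mulVec (natGradA M f (x τ)))) Set.univ :=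
    antitoneOn_of_deriv_nonpos convex_univ hWdiff.continuous.continuousOn
      hWdiff.differentiableOn (fun s _ => hderiv s)
  have h1 : Real.exp (2*α*t) *
      dotProduct (natGradA M f (x t)) ((M (x t)).mulVec (natGradA M f (x t)))
      ≤ Real.exp (2*α*0) *
      dotProduct (natGradA M f (x 0)) ((M (x 0)).mulVec (natGradA M f (x 0))) :=
    hmono (Set.mem_univ 0) (Set.mem_univ t) ht
  have h2 : Real.exp (2*α*t) *
      dotProduct (natGradA M f (x t)) ((M (x t)).mulVec (natGradA M f (x t)))
      ≤ dotProduct (natGradA M f (x 0)) ((M (x 0)).mulVec (natGradA M f (x 0))) := by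
    have : Real.exp (2*α*0) = 1 := by norm_num
    rw [this, one_mul] at h1
    exact h1
  have hE1 : Real.exp (-2*α*t) * Real.exp (2*α*t) = 1 := by
    rw [← Real.exp_add, show -2*α*t + 2*α*t = 0 by ring, Real.exp_zero]
  calc dotProduct (natGradA M f (x t)) ((M (x t)).mulVec (natGradA M f (x t)))
      = Real.exp (-2*α*t) * (Real.exp (2*α*t) *
          dotProduct (natGradA M f (x t)) ((M (x t)).mulVec (natGradA M f (x t)))) := by
        rw [← mul_assoc, hE1, one_mul]
    _ ≤ Real.exp (-2*α*t) *
          dotProduct (natGradA M f (x 0)) ((M (x 0)).mulVec (natGradA M f (x 0))) :=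
        mul_le_mul_of_nonneg_left h2 (Real.exp_pos _).le
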